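/- arXiv:2110.15584 — 3 statements merged into one kernel-verified Lean document; each statement's English description precedes it below -/
import Mathlib

section
/- Let I be an interval of length h_e, and let N, C be disjoint measurable subsets of I with |N| + |C| = h_e and |N| > 0. Let μ : I → ℝ be a measurable function vanishing on N, and suppose μ has finite fractional Sobolev seminorm |μ|_{δ,I}² = ∫_I ∫_I |μ(ξ) − μ(η)|² / |ξ − η|^{1+2δ} dη dξ for some 0 < δ ≤ 1/2. Then ‖μ‖_{L²(I)} ≤ |N|^{−1/2} · h_e^{1/2+δ} · |μ|_{δ,I}. -/
/-!
For `ξ ∈ I` and `η ∈ N` we have `μ η = 0` and `|ξ - η| ≤ h_e`, so the Gagliardo kernel is at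
least `μ(ξ)² / h_e^(1+2δ)`. Integrating in `η` over `N` only and then in `ξ` over `I` gives
`|N| / h_e^(1+2δ) · ‖μ‖² ≤ |μ|²_{δ,I}`, and taking square roots gives the estimate.
-/

open MeasureTheory Set

noncomputable def gagliardoKernel (μ : ℝ → ℝ) (s ξ η : ℝ) : ℝ :=
  (μ ξ - μ η) ^ 2 / |ξ - η| ^ s

lemma gagliardoKernel_nonneg (μ : ℝ → ℝ) (s ξ η : ℝ) : 0 ≤ gagliardoKernel μ s ξ η :=
  div_nonneg (sq_nonneg _) (Real.rpow_nonneg (abs_nonneg _) _)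

lemma sq_div_rpow_le_gagliardoKernel {μ : ℝ → ℝ} {s h ξ η : ℝ} (hs : 0 ≤ s) (hη : μ η = 0)
    (hξη : |ξ - η| ≤ h) : μ ξ ^ 2 / h ^ s ≤ gagliardoKernel μ s ξ η := by
  rw [gagliardoKernel, hη, sub_zero]
  rcases eq_or_ne ξ η with rfl | hne
  · simp [hη]
  · have hpos : 0 < |ξ - η| := abs_pos.2 (sub_ne_zero.2 hne)
    exact div_le_div_of_nonneg_left (sq_nonneg _) (Real.rpow_pos_of_pos hpos s)
      (Real.rpow_le_rpow hpos.le hξη hs)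

section Interval

variable {μ : ℝ → ℝ} {a b s : ℝ} {N : Set ℝ}

lemma mul_sq_div_rpow_le_integral_gagliardoKernel (hs : 0 ≤ s) (hNm : MeasurableSet N)
    (hNI : N ⊆ Icc a b) (hμN : ∀ᵐ η ∂(volume.restrict N), μ η = 0) {ξ : ℝ} (hξ : ξ ∈ Icc a b)
    (hint : IntegrableOn (gagliardoKernel μ s ξ) (Icc a b)) :
    (volume N).toReal * (μ ξ ^ 2 / (b - a) ^ s) ≤
      ∫ η in Icc a b, gagliardoKernel μ s ξ η := by
  have hNfin : volume N ≠ ⊤ := ((measure_mono hNI).trans_lt measure_Icc_lt_top).ne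
  calc (volume N).toReal * (μ ξ ^ 2 / (b - a) ^ s)
      = ∫ _ in N, μ ξ ^ 2 / (b - a) ^ s := by rw [setIntegral_const, smul_eq_mul, measureReal_def]
    _ ≤ ∫ η in N, gagliardoKernel μ s ξ η := by
        refine integral_mono_ae (integrableOn_const hNfin) (hint.mono_set hNI) ?_
        filter_upwards [hμN, ae_restrict_mem hNm] with η hη0 hηN
        exact sq_div_rpow_le_gagliardoKernel hs hη0
          (Real.dist_eq ξ η ▸ Real.dist_le_of_mem_Icc hξ (hNI hηN))
    _ ≤ ∫ η in Icc a b, gagliardoKernel μ s ξ η :=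
        setIntegral_mono_set hint (.of_forall fun _ => gagliardoKernel_nonneg _ _ _ _)
          hNI.eventuallyLE

lemma mul_integral_sq_le_gagliardo (hs : 0 ≤ s) (hNm : MeasurableSet N) (hNI : N ⊆ Icc a b)
    (hμN : ∀ᵐ η ∂(volume.restrict N), μ η = 0)
    (hL2 : IntegrableOn (fun x => μ x ^ 2) (Icc a b))
    (hsem : IntegrableOn (fun p : ℝ × ℝ => gagliardoKernel μ s p.1 p.2) (Icc a b ×ˢ Icc a b)) :
    (volume N).toReal / (b - a) ^ s * ∫ x in Icc a b, μ x ^ 2 ≤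
      ∫ ξ in Icc a b, ∫ η in Icc a b, gagliardoKernel μ s ξ η := by
  have hprod : Integrable (fun p : ℝ × ℝ => gagliardoKernel μ s p.1 p.2)
      ((volume.restrict (Icc a b)).prod (volume.restrict (Icc a b))) := by
    rwa [Measure.prod_restrict, ← Measure.volume_eq_prod]
  rw [← integral_const_mul]
  refine integral_mono_ae (hL2.const_mul _) hprod.integral_prod_left ?_
  filter_upwards [hprod.prod_right_ae, ae_restrict_mem measurableSet_Icc] with ξ hint hξ
  calc (volume N).toReal / (b - a) ^ s * μ ξ ^ 2
      = (volume N).toReal * (μ ξ ^ 2 / (b - a) ^ s) := by ring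
    _ ≤ _ := mul_sq_div_rpow_le_integral_gagliardoKernel hs hNm hNI hμN hξ hint

end Interval

lemma sqrt_rpow_div_eq {h m δ : ℝ} (hh : 0 < h) (hm : 0 < m) :
    Real.sqrt (h ^ (1 + 2 * δ) / m) = m ^ (-(1 : ℝ) / 2) * h ^ ((1 : ℝ) / 2 + δ) := by
  rw [Real.sqrt_div' _ hm.le, Real.sqrt_eq_rpow, ← Real.rpow_mul hh.le, Real.sqrt_eq_rpow,
    div_eq_inv_mul, ← Real.rpow_neg hm.le]
  ring_nf

theorem stmt0_general (a b he δ : ℝ) (hhe : 0 < he) (hab : b - a = he)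
    (N : Set ℝ) (hNm : MeasurableSet N)
    (hNI : N ⊆ Icc a b)
    (hNpos : 0 < (volume N).toReal)
    (μ : ℝ → ℝ)
    (hμN : ∀ᵐ x ∂(volume.restrict N), μ x = 0)
    (hδ : 0 < δ)
    (hL2 : IntegrableOn (fun x => μ x ^ 2) (Icc a b))
    (hsem : IntegrableOn
      (fun p : ℝ × ℝ => (μ p.1 - μ p.2) ^ 2 / |p.1 - p.2| ^ (1 + 2 * δ))
      (Icc a b ×ˢ Icc a b)) :
    Real.sqrt (∫ x in Icc a b, μ x ^ 2) ≤
      (volume N).toReal ^ (-(1 : ℝ) / 2) * he ^ ((1 : ℝ) / 2 + δ) *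
        Real.sqrt (∫ ξ in Icc a b, ∫ η in Icc a b,
          (μ ξ - μ η) ^ 2 / |ξ - η| ^ (1 + 2 * δ)) := by
  set S := ∫ ξ in Icc a b, ∫ η in Icc a b, (μ ξ - μ η) ^ 2 / |ξ - η| ^ (1 + 2 * δ)
  have hbound := mul_integral_sq_le_gagliardo (by positivity) hNm hNI hμN hL2 hsem
  rw [hab] at hbound
  have hA : ∫ x in Icc a b, μ x ^ 2 ≤ he ^ (1 + 2 * δ) / (volume N).toReal * S :=
    calc ∫ x in Icc a b, μ x ^ 2
        ≤ S / ((volume N).toReal / he ^ (1 + 2 * δ)) := (le_div_iff₀' (by positivity)).2 hbound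
      _ = he ^ (1 + 2 * δ) / (volume N).toReal * S := by field_simp
  calc Real.sqrt (∫ x in Icc a b, μ x ^ 2)
      ≤ Real.sqrt (he ^ (1 + 2 * δ) / (volume N).toReal * S) := Real.sqrt_le_sqrt hA
    _ = _ := by rw [Real.sqrt_mul (by positivity), sqrt_rpow_div_eq hhe hNpos]

/-- L² estimate on an interval for a function vanishing on a subset `N` of
positive measure, in terms of the Gagliardo fractional seminorm of order `δ`. -/
theorem stmt0 (a b he δ : ℝ) (hhe : 0 < he) (hab : b - a = he)
    (N C : Set ℝ) (hNm : MeasurableSet N) (hCm : MeasurableSet C)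
    (hNI : N ⊆ Icc a b) (hCI : C ⊆ Icc a b) (hdisj : Disjoint N C)
    (hsum : (volume N).toReal + (volume C).toReal = he)
    (hNpos : 0 < (volume N).toReal)
    (μ : ℝ → ℝ) (hμm : Measurable μ)
    (hμN : ∀ᵐ x ∂(volume.restrict N), μ x = 0)
    (hδ : 0 < δ) (hδ' : δ ≤ 1 / 2)
    (hL2 : IntegrableOn (fun x => μ x ^ 2) (Icc a b))
    (hsem : IntegrableOn
      (fun p : ℝ × ℝ => (μ p.1 - μ p.2) ^ 2 / |p.1 - p.2| ^ (1 + 2 * δ))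
      (Icc a b ×ˢ Icc a b)) :
    Real.sqrt (∫ x in Icc a b, μ x ^ 2) ≤
      (volume N).toReal ^ (-(1 : ℝ) / 2) * he ^ ((1 : ℝ) / 2 + δ) *
        Real.sqrt (∫ ξ in Icc a b, ∫ η in Icc a b,
          (μ ξ - μ η) ^ 2 / |ξ - η| ^ (1 + 2 * δ)) :=
  stmt0_general a b he δ hhe hab N hNm hNI hNpos μ hμN hδ hL2 hsem
end

section
/- Let I be an interval of length h_e, and let N, C be disjoint measurable subsets of I with |N| + |C| = h_e and |C| > 0. Let g : I → ℝ be measurable, vanishing a.e. on C, with finite Gagliardo seminorm |g|_{δ,I} for some 0 < δ ≤ 1/2. Then ‖g‖_{L²(I)} ≤ |C|^{−1/2} · h_e^{1/2+δ} · |g|_{δ,I}. -/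
open MeasureTheory Set

/-! Fix `ξ ∈ I`. Since `g = 0` a.e. on `C` and `|ξ - η| ≤ h_e` on `I`, for a.e. `η ∈ C`
`g(ξ)² = (g(ξ) - g(η))² ≤ h_e^{1+2δ} (g(ξ) - g(η))² / |ξ - η|^{1+2δ}`.
Averaging over `η ∈ C`, enlarging `C` to `I` and integrating in `ξ` gives
`|C| ‖g‖² ≤ h_e^{1+2δ} |g|²_{δ,I}`; take square roots. -/

theorem measureReal_mul_setIntegral_le_of_ae_le_kernel {α : Type*} [MeasurableSpace α]
    {μ : Measure α} [SFinite μ] {I C : Set α} (hCI : C ⊆ I) (hC : μ C ≠ ⊤)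
    {u : α → ℝ} {F : α → α → ℝ} {K : ℝ} (hK : 0 ≤ K) (hF : ∀ x y, 0 ≤ F x y)
    (hu : IntegrableOn u I μ)
    (hFi : IntegrableOn (fun p : α × α => F p.1 p.2) (I ×ˢ I) (μ.prod μ))
    (hbound : ∀ᵐ x ∂μ.restrict I, ∀ᵐ y ∂μ.restrict C, u x ≤ K * F x y) :
    μ.real C * ∫ x in I, u x ∂μ ≤ K * ∫ x in I, ∫ y in I, F x y ∂μ ∂μ := by
  rw [IntegrableOn, ← Measure.prod_restrict] at hFi
  have hrow : ∀ᵐ x ∂μ.restrict I, μ.real C * u x ≤ K * ∫ y in I, F x y ∂μ := by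
    filter_upwards [hbound, hFi.prod_right_ae] with x hx hFx
    calc μ.real C * u x = ∫ _ in C, u x ∂μ := by rw [setIntegral_const, smul_eq_mul]
      _ ≤ ∫ y in C, K * F x y ∂μ :=
        integral_mono_ae (integrableOn_const hC) ((IntegrableOn.mono_set hFx hCI).const_mul K) hx
      _ ≤ ∫ y in I, K * F x y ∂μ :=
        setIntegral_mono_set (hFx.const_mul K)
          (.of_forall fun y => mul_nonneg hK (hF x y)) hCI.eventuallyLE
      _ = K * ∫ y in I, F x y ∂μ := integral_const_mul K _
  rw [← integral_const_mul, ← integral_const_mul]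
  exact integral_mono_ae (hu.const_mul _) (hFi.integral_prod_left.const_mul K) hrow

theorem sq_le_rpow_mul_sq_sub_div_rpow {a b p x y : ℝ} {g : ℝ → ℝ} (hp : 0 ≤ p)
    (hx : x ∈ Icc a b) (hy : y ∈ Icc a b) (hgy : g y = 0) :
    g x ^ 2 ≤ (b - a) ^ p * ((g x - g y) ^ 2 / |x - y| ^ p) := by
  rcases eq_or_ne x y with rfl | hxy
  · simp [hgy]
  have hdist : 0 < |x - y| := abs_pos.mpr (sub_ne_zero.mpr hxy)
  rw [hgy, sub_zero, mul_div_assoc', le_div_iff₀ (by positivity), mul_comm]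
  exact mul_le_mul_of_nonneg_right
    (Real.rpow_le_rpow hdist.le (Real.dist_le_of_mem_Icc hx hy) hp) (sq_nonneg _)

theorem sqrt_le_rpow_neg_half_mul_sqrt_mul_sqrt {c A K B : ℝ} (hc : 0 < c) (hK : 0 ≤ K)
    (h : c * A ≤ K * B) : √A ≤ c ^ (-(1 : ℝ) / 2) * √K * √B := by
  have hc' : c ^ (-(1 : ℝ) / 2) = (√c)⁻¹ := by
    rw [neg_div, Real.rpow_neg hc.le, Real.sqrt_eq_rpow]
  calc √A ≤ √(K * B / c) := Real.sqrt_le_sqrt (by rwa [le_div_iff₀ hc, mul_comm])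
    _ = c ^ (-(1 : ℝ) / 2) * √K * √B := by
      rw [Real.sqrt_div' _ hc.le, Real.sqrt_mul hK, hc', div_eq_mul_inv]
      ring

theorem stmt2_general (a b he δ : ℝ) (hhe : 0 < he) (hab : b - a = he)
    (C : Set ℝ) (hCI : C ⊆ Icc a b) (hCpos : 0 < (volume C).toReal)
    (g : ℝ → ℝ) (hgC : ∀ᵐ x ∂(volume.restrict C), g x = 0) (hδ : 0 < δ)
    (hL2 : IntegrableOn (fun x => g x ^ 2) (Icc a b))
    (hsem : IntegrableOn
      (fun p : ℝ × ℝ => (g p.1 - g p.2) ^ 2 / |p.1 - p.2| ^ (1 + 2 * δ))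
      (Icc a b ×ˢ Icc a b)) :
    Real.sqrt (∫ x in Icc a b, g x ^ 2) ≤
      (volume C).toReal ^ (-(1 : ℝ) / 2) * he ^ ((1 : ℝ) / 2 + δ) *
        Real.sqrt (∫ ξ in Icc a b, ∫ η in Icc a b,
          (g ξ - g η) ^ 2 / |ξ - η| ^ (1 + 2 * δ)) := by
  have hp : (0 : ℝ) ≤ 1 + 2 * δ := by linarith
  have hCfin : volume C ≠ ⊤ := (measure_mono hCI).trans_lt measure_Icc_lt_top |>.ne
  have hbound : ∀ᵐ ξ ∂volume.restrict (Icc a b), ∀ᵐ η ∂volume.restrict C,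
      g ξ ^ 2 ≤ he ^ (1 + 2 * δ) * ((g ξ - g η) ^ 2 / |ξ - η| ^ (1 + 2 * δ)) := by
    filter_upwards [ae_restrict_mem measurableSet_Icc] with ξ hξ
    filter_upwards [hgC, ae_restrict_of_ae_restrict_of_subset hCI
      (ae_restrict_mem measurableSet_Icc)] with η hgη hη
    exact hab ▸ sq_le_rpow_mul_sq_sub_div_rpow hp hξ hη hgη
  have hsqrt : √(he ^ (1 + 2 * δ)) = he ^ ((1 : ℝ) / 2 + δ) := by
    rw [Real.sqrt_eq_rpow, ← Real.rpow_mul hhe.le]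
    ring_nf
  rw [← hsqrt]
  exact sqrt_le_rpow_neg_half_mul_sqrt_mul_sqrt hCpos (by positivity)
    (measureReal_mul_setIntegral_le_of_ae_le_kernel hCI hCfin (by positivity)
      (fun _ _ => by positivity) hL2 hsem hbound)

/-- L² estimate on an interval for a function vanishing on a subset `C` of
positive measure, in terms of the Gagliardo fractional seminorm of order `δ`. -/
theorem stmt2 (a b he δ : ℝ) (hhe : 0 < he) (hab : b - a = he)
    (N C : Set ℝ) (hNm : MeasurableSet N) (hCm : MeasurableSet C)
    (hNI : N ⊆ Icc a b) (hCI : C ⊆ Icc a b) (hdisj : Disjoint N C)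
    (hsum : (volume N).toReal + (volume C).toReal = he)
    (hCpos : 0 < (volume C).toReal)
    (g : ℝ → ℝ) (hgm : Measurable g)
    (hgC : ∀ᵐ x ∂(volume.restrict C), g x = 0)
    (hδ : 0 < δ) (hδ' : δ ≤ 1 / 2)
    (hL2 : IntegrableOn (fun x => g x ^ 2) (Icc a b))
    (hsem : IntegrableOn
      (fun p : ℝ × ℝ => (g p.1 - g p.2) ^ 2 / |p.1 - p.2| ^ (1 + 2 * δ))
      (Icc a b ×ˢ Icc a b)) :
    Real.sqrt (∫ x in Icc a b, g x ^ 2) ≤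
      (volume C).toReal ^ (-(1 : ℝ) / 2) * he ^ ((1 : ℝ) / 2 + δ) *
        Real.sqrt (∫ ξ in Icc a b, ∫ η in Icc a b,
          (g ξ - g η) ^ 2 / |ξ - η| ^ (1 + 2 * δ)) :=
  stmt2_general a b he δ hhe hab C hCI hCpos g hgC hδ hL2 hsem
end

section
/- Let I be an interval of length h_e, and let N, C be disjoint measurable subsets with |N| + |C| = h_e and |N|, |C| > 0. Let g : I → ℝ be measurable, vanishing a.e. on C, with finite Gagliardo seminorm |g|_{δ,I} for some 0 < δ ≤ 1/2. Then ‖g‖_{L¹(I)} ≤ (|N|^{1/2}/|C|^{1/2}) · h_e^{1/2+δ} · |g|_{δ,I}. -/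
/-!
Because `g` vanishes on `C`, `|C| · ∫_N |g| = ∫_{N × C} |g ξ - g η|`, and since `I = N ∪ C` up to
a null set the left side is `|C| · ‖g‖_{L¹(I)}`. Writing
`|g ξ - g η| = (|g ξ - g η|² / |ξ - η|^{1+2δ})^{1/2} · (|ξ - η|^{1+2δ})^{1/2}`, Cauchy–Schwarz and
`|ξ - η| ≤ h_e` bound the product integral by `|g|_{δ,I} · (h_e^{1+2δ} |N| |C|)^{1/2}`;
dividing by `|C|` gives the estimate.
-/

open MeasureTheory Set
open scoped ENNReal

section

variable {α : Type*} [MeasurableSpace α] {μ : Measure α}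

theorem ae_eq_union_of_toReal_measure_add_eq {s N C : Set α} (hNs : N ⊆ s) (hCs : C ⊆ s)
    (hN : MeasurableSet N) (hC : MeasurableSet C) (hNC : Disjoint N C) (hs : μ s ≠ ∞)
    (hsum : (μ N).toReal + (μ C).toReal = (μ s).toReal) : s =ᵐ[μ] (N ∪ C : Set α) := by
  have hNfin : μ N ≠ ∞ := ne_top_of_le_ne_top hs (measure_mono hNs)
  have hCfin : μ C ≠ ∞ := ne_top_of_le_ne_top hs (measure_mono hCs)
  have hunion : μ (N ∪ C) = μ s := by
    rw [measure_union hNC hC, ← ENNReal.ofReal_toReal hs, ← hsum,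
      ENNReal.ofReal_add ENNReal.toReal_nonneg ENNReal.toReal_nonneg,
      ENNReal.ofReal_toReal hNfin, ENNReal.ofReal_toReal hCfin]
  exact (ae_eq_of_subset_of_measure_ge (union_subset hNs hCs) hunion.ge
    (hN.union hC).nullMeasurableSet hs).symm

theorem setLIntegral_eq_of_ae_eq_union {s N C : Set α} {f : α → ℝ≥0∞}
    (hs : s =ᵐ[μ] (N ∪ C : Set α)) (hC : MeasurableSet C) (hNC : Disjoint N C)
    (hf : ∀ᵐ x ∂μ.restrict C, f x = 0) :
    ∫⁻ x in s, f x ∂μ = ∫⁻ x in N, f x ∂μ := by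
  rw [setLIntegral_congr hs, lintegral_union hC hNC, lintegral_congr_ae hf, lintegral_zero,
    add_zero]

theorem setLIntegral_prod_ofReal_abs_sub [SFinite μ] {g : α → ℝ} (hg : Measurable g)
    (N C : Set α) (hgC : ∀ᵐ x ∂μ.restrict C, g x = 0) :
    ∫⁻ p in N ×ˢ C, ENNReal.ofReal |g p.1 - g p.2| ∂μ.prod μ
      = (∫⁻ x in N, ENNReal.ofReal |g x| ∂μ) * μ C := by
  have hm : Measurable fun p : α × α => ENNReal.ofReal |g p.1 - g p.2| :=
    ((hg.comp measurable_fst).sub (hg.comp measurable_snd)).abs.ennreal_ofReal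
  rw [← Measure.prod_restrict, lintegral_prod _ hm.aemeasurable]
  have hinner (x : α) : ∫⁻ y in C, ENNReal.ofReal |g x - g y| ∂μ
      = ENNReal.ofReal |g x| * μ C := by
    rw [lintegral_congr_ae (hgC.mono fun y hy => by rw [hy, sub_zero]), setLIntegral_const]
  simp_rw [hinner]
  exact lintegral_mul_const _ hg.abs.ennreal_ofReal

theorem lintegral_rpow_half_mul_rpow_half_le {f g : α → ℝ≥0∞} (hf : AEMeasurable f μ)
    (hg : AEMeasurable g μ) :
    ∫⁻ x, f x ^ (1 / 2 : ℝ) * g x ^ (1 / 2 : ℝ) ∂μ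
      ≤ (∫⁻ x, f x ∂μ) ^ (1 / 2 : ℝ) * (∫⁻ x, g x ∂μ) ^ (1 / 2 : ℝ) := by
  have := ENNReal.lintegral_mul_le_Lp_mul_Lq μ Real.HolderConjugate.two_two
    (hf.pow_const (1 / 2 : ℝ)) (hg.pow_const (1 / 2 : ℝ))
  simp_rw [Pi.mul_apply, ← ENNReal.rpow_mul] at this
  norm_num at this
  exact this

end

theorem abs_eq_sqrt_sq_div_mul_sqrt {u t : ℝ} (ht : 0 ≤ t) (hu : t = 0 → u = 0) :
    |u| = √(u ^ 2 / t) * √t := by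
  rcases ht.eq_or_lt with rfl | ht
  · simp [hu rfl]
  · rw [← Real.sqrt_mul (div_nonneg (sq_nonneg u) ht.le), div_mul_cancel₀ _ ht.ne',
      Real.sqrt_sq_eq_abs]

theorem lintegral_ofReal_abs_sub_le (ν : Measure (ℝ × ℝ)) {g : ℝ → ℝ} (hg : Measurable g)
    (s : ℝ) :
    ∫⁻ p, ENNReal.ofReal |g p.1 - g p.2| ∂ν
      ≤ (∫⁻ p, ENNReal.ofReal ((g p.1 - g p.2) ^ 2 / |p.1 - p.2| ^ s) ∂ν) ^ (1 / 2 : ℝ)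
        * (∫⁻ p, ENNReal.ofReal (|p.1 - p.2| ^ s) ∂ν) ^ (1 / 2 : ℝ) := by
  have hpt (p : ℝ × ℝ) : ENNReal.ofReal |g p.1 - g p.2|
      = ENNReal.ofReal ((g p.1 - g p.2) ^ 2 / |p.1 - p.2| ^ s) ^ (1 / 2 : ℝ)
        * ENNReal.ofReal (|p.1 - p.2| ^ s) ^ (1 / 2 : ℝ) := by
    have hw : 0 ≤ |p.1 - p.2| ^ s := by positivity
    have hvanish : |p.1 - p.2| ^ s = 0 → g p.1 - g p.2 = 0 := fun h => by
      obtain ⟨hd, -⟩ := (Real.rpow_eq_zero_iff_of_nonneg (abs_nonneg _)).mp h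
      rw [sub_eq_zero.mp (abs_eq_zero.mp hd), sub_self]
    rw [ENNReal.ofReal_rpow_of_nonneg (by positivity) (by norm_num),
      ENNReal.ofReal_rpow_of_nonneg hw (by norm_num), ← Real.sqrt_eq_rpow, ← Real.sqrt_eq_rpow,
      ← ENNReal.ofReal_mul (Real.sqrt_nonneg _), ← abs_eq_sqrt_sq_div_mul_sqrt hw hvanish]
  have hdiff : Measurable fun p : ℝ × ℝ => g p.1 - g p.2 :=
    (hg.comp measurable_fst).sub (hg.comp measurable_snd)
  have hw : Measurable fun p : ℝ × ℝ => |p.1 - p.2| ^ s := by fun_prop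
  simp_rw [hpt]
  exact lintegral_rpow_half_mul_rpow_half_le
    ((hdiff.pow_const 2).div hw).ennreal_ofReal.aemeasurable hw.ennreal_ofReal.aemeasurable

theorem setLIntegral_rpow_abs_sub_le {a b s : ℝ} (hs : 0 ≤ s) {N C : Set ℝ}
    (hN : N ⊆ Icc a b) (hC : C ⊆ Icc a b) :
    ∫⁻ p in N ×ˢ C, ENNReal.ofReal (|p.1 - p.2| ^ s)
      ≤ ENNReal.ofReal ((b - a) ^ s) * (volume N * volume C) := by
  calc ∫⁻ p in N ×ˢ C, ENNReal.ofReal (|p.1 - p.2| ^ s)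
      ≤ ∫⁻ _ in N ×ˢ C, ENNReal.ofReal ((b - a) ^ s) := by
        refine setLIntegral_mono measurable_const fun p hp => ?_
        have hx := hN hp.1
        have hy := hC hp.2
        gcongr
        exact abs_sub_le_of_le_of_le hx.1 hx.2 hy.1 hy.2
    _ = ENNReal.ofReal ((b - a) ^ s) * (volume N * volume C) := by
        rw [setLIntegral_const, Measure.volume_eq_prod, Measure.prod_prod]

theorem setLIntegral_abs_mul_volume_le {a b s : ℝ} (hs : 0 ≤ s) {N C : Set ℝ}
    (hN : N ⊆ Icc a b) (hC : C ⊆ Icc a b) {g : ℝ → ℝ} (hg : Measurable g)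
    (hgC : ∀ᵐ x ∂volume.restrict C, g x = 0) :
    (∫⁻ x in N, ENNReal.ofReal |g x|) * volume C
      ≤ (∫⁻ p in Icc a b ×ˢ Icc a b,
            ENNReal.ofReal ((g p.1 - g p.2) ^ 2 / |p.1 - p.2| ^ s)) ^ (1 / 2 : ℝ)
        * (ENNReal.ofReal ((b - a) ^ s) * (volume N * volume C)) ^ (1 / 2 : ℝ) := by
  rw [← setLIntegral_prod_ofReal_abs_sub hg N C hgC, ← Measure.volume_eq_prod]
  exact (lintegral_ofReal_abs_sub_le _ hg s).trans <| mul_le_mul'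
    (ENNReal.rpow_le_rpow (lintegral_mono_set (prod_mono hN hC)) (by norm_num))
    (ENNReal.rpow_le_rpow (setLIntegral_rpow_abs_sub_le hs hN hC) (by norm_num))

theorem le_of_mul_le_rpow_half {L n c h R δ : ℝ} (hc : 0 < c) (hn : 0 ≤ n) (hh : 0 ≤ h)
    (H : L * c ≤ R ^ (1 / 2 : ℝ) * (h ^ (1 + 2 * δ) * (n * c)) ^ (1 / 2 : ℝ)) :
    L ≤ n ^ (1 / 2 : ℝ) / c ^ (1 / 2 : ℝ) * h ^ (1 / 2 + δ) * √R := by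
  have hc' : c ^ (1 / 2 : ℝ) * c ^ (1 / 2 : ℝ) = c := by
    rw [← Real.rpow_add hc]; norm_num
  have hh' : (h ^ (1 + 2 * δ)) ^ (1 / 2 : ℝ) = h ^ (1 / 2 + δ) := by
    rw [← Real.rpow_mul hh]; ring_nf
  rw [Real.mul_rpow (by positivity) (by positivity), Real.mul_rpow hn hc.le, hh',
    ← Real.sqrt_eq_rpow] at H
  have hy : c ^ (1 / 2 : ℝ) ≠ 0 := (Real.rpow_pos_of_pos hc _).ne'
  refine le_of_mul_le_mul_right (H.trans_eq ?_) hc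
  calc √R * (h ^ (1 / 2 + δ) * (n ^ (1 / 2 : ℝ) * c ^ (1 / 2 : ℝ)))
      = n ^ (1 / 2 : ℝ) / c ^ (1 / 2 : ℝ) * h ^ (1 / 2 + δ) * √R
          * (c ^ (1 / 2 : ℝ) * c ^ (1 / 2 : ℝ)) := by field_simp
    _ = _ := by rw [hc']

theorem stmt3_general (a b he δ : ℝ) (hhe : 0 < he) (hab : b - a = he)
    (N C : Set ℝ) (hNm : MeasurableSet N) (hCm : MeasurableSet C)
    (hNI : N ⊆ Icc a b) (hCI : C ⊆ Icc a b) (hdisj : Disjoint N C)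
    (hsum : (volume N).toReal + (volume C).toReal = he)
    (hCpos : 0 < (volume C).toReal)
    (g : ℝ → ℝ) (hgm : Measurable g)
    (hgC : ∀ᵐ x ∂(volume.restrict C), g x = 0)
    (hδ : 0 < δ)
    (hL1 : IntegrableOn (fun x => |g x|) (Icc a b))
    (hsem : IntegrableOn
      (fun p : ℝ × ℝ => (g p.1 - g p.2) ^ 2 / |p.1 - p.2| ^ (1 + 2 * δ))
      (Icc a b ×ˢ Icc a b)) :
    (∫ x in Icc a b, |g x|) ≤
      ((volume N).toReal ^ ((1 : ℝ) / 2) / (volume C).toReal ^ ((1 : ℝ) / 2)) *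
        he ^ ((1 : ℝ) / 2 + δ) *
        Real.sqrt (∫ ξ in Icc a b, ∫ η in Icc a b,
          (g ξ - g η) ^ 2 / |ξ - η| ^ (1 + 2 * δ)) := by
  have hIcc : Icc a b =ᵐ[volume] (N ∪ C : Set ℝ) :=
    ae_eq_union_of_toReal_measure_add_eq hNI hCI hNm hCm hdisj (by simp)
      (by rw [hsum, Real.volume_Icc, hab, ENNReal.toReal_ofReal hhe.le])
  have hL : ENNReal.ofReal (∫ x in Icc a b, |g x|) = ∫⁻ x in N, ENNReal.ofReal |g x| := by
    rw [ofReal_integral_eq_lintegral_ofReal hL1 (ae_of_all _ fun _ => abs_nonneg _),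
      setLIntegral_eq_of_ae_eq_union hIcc hCm hdisj (hgC.mono fun x hx => by simp [hx])]
  have hR := ofReal_integral_eq_lintegral_ofReal hsem (ae_of_all _ fun _ => by positivity)
  have key := setLIntegral_abs_mul_volume_le (s := 1 + 2 * δ) (by positivity) hNI hCI hgm hgC
  rw [← hL, ← hR, hab] at key
  have hNfin : volume N < ∞ := (measure_mono hNI).trans_lt measure_Icc_lt_top
  have hCfin : volume C < ∞ := (measure_mono hCI).trans_lt measure_Icc_lt_top
  have hreal := ENNReal.toReal_mono (by finiteness) key
  simp only [ENNReal.toReal_mul, ← ENNReal.toReal_rpow] at hreal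
  rw [ENNReal.toReal_ofReal (integral_nonneg fun _ => abs_nonneg _),
    ENNReal.toReal_ofReal (integral_nonneg fun _ => by positivity),
    ENNReal.toReal_ofReal (by positivity), Measure.volume_eq_prod, setIntegral_prod _ hsem]
    at hreal
  exact le_of_mul_le_rpow_half hCpos ENNReal.toReal_nonneg hhe.le hreal

/-- L¹ estimate on an interval for a function vanishing on `C`, in terms of the
measures of `N`, `C` and the Gagliardo fractional seminorm of order `δ`. -/
theorem stmt3 (a b he δ : ℝ) (hhe : 0 < he) (hab : b - a = he)
    (N C : Set ℝ) (hNm : MeasurableSet N) (hCm : MeasurableSet C)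
    (hNI : N ⊆ Icc a b) (hCI : C ⊆ Icc a b) (hdisj : Disjoint N C)
    (hsum : (volume N).toReal + (volume C).toReal = he)
    (hNpos : 0 < (volume N).toReal) (hCpos : 0 < (volume C).toReal)
    (g : ℝ → ℝ) (hgm : Measurable g)
    (hgC : ∀ᵐ x ∂(volume.restrict C), g x = 0)
    (hδ : 0 < δ) (hδ' : δ ≤ 1 / 2)
    (hL1 : IntegrableOn (fun x => |g x|) (Icc a b))
    (hsem : IntegrableOn
      (fun p : ℝ × ℝ => (g p.1 - g p.2) ^ 2 / |p.1 - p.2| ^ (1 + 2 * δ))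
      (Icc a b ×ˢ Icc a b)) :
    (∫ x in Icc a b, |g x|) ≤
      ((volume N).toReal ^ ((1 : ℝ) / 2) / (volume C).toReal ^ ((1 : ℝ) / 2)) *
        he ^ ((1 : ℝ) / 2 + δ) *
        Real.sqrt (∫ ξ in Icc a b, ∫ η in Icc a b,
          (g ξ - g η) ^ 2 / |ξ - η| ^ (1 + 2 * δ)) :=
  stmt3_general a b he δ hhe hab N C hNm hCm hNI hCI hdisj hsum hCpos g hgm hgC hδ hL1 hsem
end
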